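/- arXiv:2401.11261 — 2 statements merged into one kernel-verified Lean document; each statement's English description precedes it below -/
import Mathlib

section
/- Let N ≥ 2, let M be the N×N matrix with M_{ji} = φ_i(μ_j) > 0 for i ≠ j and M_{jj} = 0, and let π, π' be probability vectors in ℝ^N. Define L⁻ ∈ ℝ^N by L⁻_i = min(π_i − π'_i, 0). If ‖NGMG(L⁻)‖₁ = ‖−M L⁻‖₁ = 0, then π = π', and consequently W₁(π, π') = ∫_M |Σ_n (π_n − π'_n) F_n(x)| dx = 0. -/
open MeasureTheory Matrix

/-- Gaussian density with mean `μ` and standard deviation `σ`. -/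
noncomputable def gaussPDF (μ σ x : ℝ) : ℝ :=
  (1 / (σ * Real.sqrt (2 * Real.pi))) * Real.exp (-((x - μ) ^ 2) / (2 * σ ^ 2))

/-- Gaussian CDF with mean `μ` and standard deviation `σ`. -/
noncomputable def gaussCDF (μ σ x : ℝ) : ℝ :=
  ∫ s in Set.Iic x, gaussPDF μ σ s

/-- ℓ¹ norm on `Fin N → ℝ`. -/
noncomputable def l1norm {N : ℕ} (v : Fin N → ℝ) : ℝ :=
  ∑ n, |v n|

/-! Once `‖M L⁻‖₁ = 0`, every row of `M L⁻` is a sum of nonpositive terms `M j i * L⁻ i` adding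
up to zero. Each coordinate `i` has some other row `j ≠ i` in which `M j i > 0`, so `L⁻ = 0`, i.e.
`π' ≤ π` coordinatewise; as both have total mass one, `π = π'`. -/

lemma gaussPDF_pos (μ : ℝ) {σ : ℝ} (hσ : 0 < σ) (x : ℝ) : 0 < gaussPDF μ σ x := by
  unfold gaussPDF
  positivity

lemma l1norm_eq_zero_iff {N : ℕ} {v : Fin N → ℝ} : l1norm v = 0 ↔ v = 0 := by
  simp [l1norm, Finset.sum_eq_zero_iff_of_nonneg, funext_iff]

lemma Matrix.eq_zero_of_mulVec_eq_zero_of_nonpos {ι : Type*} [Fintype ι] [Nontrivial ι]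
    {M : Matrix ι ι ℝ} (hM : ∀ j i, 0 ≤ M j i) (hM_offDiag : ∀ j i, i ≠ j → 0 < M j i)
    {v : ι → ℝ} (hv : ∀ i, v i ≤ 0) (hMv : M *ᵥ v = 0) : v = 0 := by
  funext i
  obtain ⟨j, hji⟩ := exists_ne i
  have hterms : ∀ k ∈ Finset.univ, M j k * v k ≤ 0 := fun k _ =>
    mul_nonpos_of_nonneg_of_nonpos (hM j k) (hv k)
  have hrow : ∑ k, M j k * v k = 0 := congrFun hMv j
  have hji_term := (Finset.sum_eq_zero_iff_of_nonpos hterms).mp hrow i (Finset.mem_univ i)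
  exact (mul_eq_zero.mp hji_term).resolve_left (hM_offDiag j i hji.symm).ne'

theorem stmt_7_general {N : ℕ} (hN : 2 ≤ N) (σ : ℝ) (hσ : 0 < σ)
    (μ : Fin N → ℝ)
    (M : Matrix (Fin N) (Fin N) ℝ)
    (hM : ∀ j i, M j i = if i = j then 0 else gaussPDF (μ i) σ (μ j))
    (π π' : Fin N → ℝ)
    (hπs : ∑ n, π n = 1)
    (hπ's : ∑ n, π' n = 1)
    (Lm : Fin N → ℝ) (hLm : ∀ i, Lm i = min (π i - π' i) 0)
    (h0 : l1norm (-(M *ᵥ Lm)) = 0)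
    (a b : ℝ) :
    π = π' ∧ ∫ x in Set.Icc a b, |∑ n, (π n - π' n) * gaussCDF (μ n) σ x| = 0 := by
  have : Nontrivial (Fin N) := Fin.nontrivial_iff_two_le.mpr hN
  have hM_nonneg : ∀ j i, 0 ≤ M j i := fun j i => by
    rw [hM]
    split_ifs
    exacts [le_rfl, (gaussPDF_pos _ hσ _).le]
  have hM_offDiag : ∀ j i, i ≠ j → 0 < M j i := fun j i hij => by
    rw [hM, if_neg hij]
    exact gaussPDF_pos _ hσ _
  have hMLm : M *ᵥ Lm = 0 := neg_eq_zero.mp (l1norm_eq_zero_iff.mp h0)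
  have hLm_zero : Lm = 0 := M.eq_zero_of_mulVec_eq_zero_of_nonpos hM_nonneg hM_offDiag
    (fun i => hLm i ▸ min_le_right _ _) hMLm
  have hle : ∀ i ∈ Finset.univ, π' i ≤ π i := fun i _ => by
    have hi := congrFun hLm_zero i
    rw [hLm] at hi
    exact sub_nonneg.mp (min_eq_right_iff.mp hi)
  have hπ_eq : π = π' := funext fun i =>
    ((Finset.sum_eq_sum_iff_of_le hle).mp (hπ's.trans hπs.symm) i (Finset.mem_univ i)).symm
  subst hπ_eq
  simp

/-- if `‖NGMG(L⁻)‖₁ = ‖-M L⁻‖₁ = 0`, where `L⁻ᵢ = min (πᵢ - π'ᵢ) 0` and `M`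
is the Gaussian kernel matrix with zero diagonal, then `π = π'` and the 1-Wasserstein
distance `∫_M |∑ (πₙ - π'ₙ) Fₙ(x)| dx` vanishes. -/
theorem stmt_7 {N : ℕ} (hN : 2 ≤ N) (σ : ℝ) (hσ : 0 < σ)
    (μ : Fin N → ℝ) (hμ : Function.Injective μ)
    (M : Matrix (Fin N) (Fin N) ℝ)
    (hM : ∀ j i, M j i = if i = j then 0 else gaussPDF (μ i) σ (μ j))
    (π π' : Fin N → ℝ)
    (hπ : ∀ n, 0 ≤ π n) (hπs : ∑ n, π n = 1)
    (hπ' : ∀ n, 0 ≤ π' n) (hπ's : ∑ n, π' n = 1)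
    (Lm : Fin N → ℝ) (hLm : ∀ i, Lm i = min (π i - π' i) 0)
    (h0 : l1norm (-(M *ᵥ Lm)) = 0)
    (a b : ℝ) :
    π = π' ∧ ∫ x in Set.Icc a b, |∑ n, (π n - π' n) * gaussCDF (μ n) σ x| = 0 :=
  stmt_7_general hN σ hσ μ M hM π π' hπs hπ's Lm hLm h0 a b
end

section
/- Let π, π' be probability vectors in ℝ^N, and let F_n be the CDF of the Gaussian with mean μ_n and standard deviation σ > 0, the means μ_1, …, μ_N being pairwise distinct. If ∫_ℝ |Σ_{n=1}^N (π_n − π'_n) F_n(x)| dx = 0, then π = π', and consequently the vector L⁻ with entries min(π_i − π'_i, 0) is zero, so NGMG(L⁻) = −M L⁻ = 0. -/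
open MeasureTheory Matrix

/-!
If `∫ |∑ cₙ Fₙ| = 0` with `∑ cₙ = 0`, the function `∑ cₙ Fₙ = ∑ cₙ (Fₙ - F)` (for any fixed
Gaussian CDF `F`) is integrable, because `F_μ - F_ν` is the convolution of the indicator of an
interval with a Gaussian density. Being also continuous, it vanishes identically, and
differentiating gives `∑ cₙ φₙ = 0`. After division by the centred density, `φₙ` becomes a
constant multiple of `x ↦ exp (μₙ x / σ²)`; these are distinct characters of `(ℝ, +)`, so
Dedekind's lemma makes the `φₙ` linearly independent and forces `c = π - π' = 0`.
-/

section

open Real Set ProbabilityTheory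
open scoped Convolution

lemma Continuous.eq_zero_of_integral_abs_eq_zero {X : Type*} [TopologicalSpace X]
    [MeasurableSpace X] [OpensMeasurableSpace X] {m : Measure X} [m.IsOpenPosMeasure]
    {f : X → ℝ} (hf : Continuous f) (hfi : Integrable f m) (h : ∫ x, |f x| ∂m = 0) : f = 0 := by
  have hae := (integral_eq_zero_iff_of_nonneg (fun x => abs_nonneg (f x)) hfi.abs).1 h
  have habs := (hf.abs.ae_eq_iff_eq m continuous_const).1 hae
  exact funext fun x => abs_eq_zero.1 (congrFun habs x)

noncomputable def expMulChar (a : ℝ) : Multiplicative ℝ →* ℝ where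
  toFun x := exp (a * x.toAdd)
  map_one' := by simp
  map_mul' x y := by simp [mul_add, exp_add]

lemma linearIndependent_exp_mul {ι : Type*} {a : ι → ℝ} (ha : Function.Injective a) :
    LinearIndependent ℝ fun i (x : ℝ) => exp (a i * x) := by
  refine (linearIndependent_monoidHom (Multiplicative ℝ) ℝ).comp (fun i => expMulChar (a i)) ?_
  intro i j hij
  have := congrArg (fun χ : Multiplicative ℝ →* ℝ => χ (.ofAdd 1)) hij
  exact ha (by simpa [expMulChar] using this)

lemma gaussPDF_eq_gaussianPDFReal {σ : ℝ} (hσ : 0 < σ) (μ : ℝ) :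
    gaussPDF μ σ = gaussianPDFReal μ (σ ^ 2).toNNReal := by
  ext x
  rw [gaussianPDFReal, Real.coe_toNNReal _ (sq_nonneg σ),
    show 2 * π * σ ^ 2 = σ ^ 2 * (2 * π) by ring, sqrt_mul (sq_nonneg σ), sqrt_sq hσ.le,
    gaussPDF, one_div]

lemma continuous_gaussPDF (μ σ : ℝ) : Continuous (gaussPDF μ σ) := by
  unfold gaussPDF
  fun_prop

lemma integrable_gaussPDF {σ : ℝ} (hσ : 0 < σ) (μ : ℝ) : Integrable (gaussPDF μ σ) :=
  gaussPDF_eq_gaussianPDFReal hσ μ ▸ integrable_gaussianPDFReal _ _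

lemma gaussPDF_eq_gaussPDF_zero_sub (μ σ x : ℝ) : gaussPDF μ σ x = gaussPDF 0 σ (x - μ) := by
  simp [gaussPDF]

lemma gaussPDF_eq_mul_exp (μ σ x : ℝ) :
    gaussPDF μ σ x = exp (-μ ^ 2 / (2 * σ ^ 2)) * (gaussPDF 0 σ x * exp (μ / σ ^ 2 * x)) := by
  simp only [gaussPDF, sub_zero]
  rw [mul_left_comm, mul_assoc, ← exp_add, ← exp_add]
  ring_nf

lemma gaussCDF_eq_gaussCDF_zero_sub (μ σ x : ℝ) : gaussCDF μ σ x = gaussCDF 0 σ (x - μ) := by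
  simp only [gaussCDF, ← integral_indicator measurableSet_Iic]
  conv_lhs => rw [← integral_add_right_eq_self _ μ]
  congr with s
  simp [indicator, gaussPDF_eq_gaussPDF_zero_sub μ σ, le_sub_iff_add_le]

lemma hasDerivAt_gaussCDF {σ : ℝ} (hσ : 0 < σ) (μ x : ℝ) :
    HasDerivAt (gaussCDF μ σ) (gaussPDF μ σ x) x := by
  have hint := integrable_gaussPDF hσ μ
  have hF : gaussCDF μ σ = fun u => gaussCDF μ σ 0 + ∫ t in (0 : ℝ)..u, gaussPDF μ σ t := by
    ext u
    rw [← intervalIntegral.integral_Iic_sub_Iic hint.integrableOn hint.integrableOn, gaussCDF,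
      gaussCDF, add_sub_cancel]
  rw [hF]
  exact (intervalIntegral.integral_hasDerivAt_right hint.intervalIntegrable
    ((continuous_gaussPDF μ σ).stronglyMeasurableAtFilter _ _)
    (continuous_gaussPDF μ σ).continuousAt).const_add _

lemma continuous_gaussCDF {σ : ℝ} (hσ : 0 < σ) (μ : ℝ) : Continuous (gaussCDF μ σ) :=
  continuous_iff_continuousAt.2 fun x => (hasDerivAt_gaussCDF hσ μ x).continuousAt

lemma gaussCDF_sub_gaussCDF_eq_convolution {σ : ℝ} (hσ : 0 < σ) {μ ν : ℝ} (h : μ ≤ ν) :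
    (fun x => gaussCDF μ σ x - gaussCDF ν σ x) =
      (Ioc μ ν).indicator 1 ⋆[ContinuousLinearMap.lsmul ℝ ℝ] gaussPDF 0 σ := by
  ext x
  have hint (a : ℝ) : IntegrableOn (gaussPDF 0 σ) (Iic a) :=
    (integrable_gaussPDF hσ 0).integrableOn
  rw [convolution_lsmul, gaussCDF_eq_gaussCDF_zero_sub μ, gaussCDF_eq_gaussCDF_zero_sub ν,
    gaussCDF, gaussCDF, intervalIntegral.integral_Iic_sub_Iic (hint _) (hint _),
    ← intervalIntegral.integral_comp_sub_left, intervalIntegral.integral_of_le h,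
    ← integral_indicator measurableSet_Ioc]
  congr with t
  by_cases ht : t ∈ Ioc μ ν <;> simp [ht]

lemma integrable_gaussCDF_sub {σ : ℝ} (hσ : 0 < σ) (μ ν : ℝ) :
    Integrable fun x => gaussCDF μ σ x - gaussCDF ν σ x := by
  wlog h : μ ≤ ν generalizing μ ν
  · simpa only [Pi.neg_def, neg_sub] using (this ν μ (le_of_not_ge h)).neg
  rw [gaussCDF_sub_gaussCDF_eq_convolution hσ h]
  exact ((integrableOn_const (C := (1 : ℝ)) measure_Ioc_lt_top.ne).integrable_indicator
    measurableSet_Ioc).integrable_convolution _ (integrable_gaussPDF hσ 0)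

lemma integrable_sum_mul_gaussCDF {ι : Type*} [Fintype ι] {σ : ℝ} (hσ : 0 < σ) (μ : ι → ℝ)
    {c : ι → ℝ} (hc : ∑ i, c i = 0) : Integrable fun x => ∑ i, c i * gaussCDF (μ i) σ x := by
  have hsub : (fun x => ∑ i, c i * gaussCDF (μ i) σ x) =
      fun x => ∑ i, c i * (gaussCDF (μ i) σ x - gaussCDF 0 σ x) := by
    ext x
    simp [mul_sub, ← Finset.sum_mul, hc]
  rw [hsub]
  exact integrable_finsetSum _ fun i _ => (integrable_gaussCDF_sub hσ (μ i) 0).const_mul (c i)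

lemma linearIndependent_gaussPDF {ι : Type*} {σ : ℝ} (hσ : σ ≠ 0) {μ : ι → ℝ}
    (hμ : Function.Injective μ) : LinearIndependent ℝ fun i => gaussPDF (μ i) σ := by
  have hker : LinearMap.ker (LinearMap.mulLeft ℝ (gaussPDF 0 σ)) = ⊥ := by
    refine LinearMap.ker_eq_bot'.2 fun f hf => funext fun x => ?_
    refine (mul_eq_zero.1 (congrFun hf x)).resolve_left ?_
    have := pi_pos
    unfold gaussPDF
    positivity
  have hinj : Function.Injective fun i => μ i / σ ^ 2 := fun i j h =>
    hμ ((div_left_inj' (pow_ne_zero 2 hσ)).1 h)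
  have hfactor : (fun i => gaussPDF (μ i) σ) =
      (fun i => Units.mk0 (exp (-μ i ^ 2 / (2 * σ ^ 2))) (exp_ne_zero _)) •
        (LinearMap.mulLeft ℝ (gaussPDF 0 σ) ∘ fun i x => exp (μ i / σ ^ 2 * x)) := by
    ext i x
    simp [gaussPDF_eq_mul_exp (μ i)]
  rw [hfactor]
  exact ((linearIndependent_exp_mul hinj).map' _ hker).units_smul _

end

theorem stmt_8_general {N : ℕ} (σ : ℝ) (hσ : 0 < σ)
    (μ : Fin N → ℝ) (hμ : Function.Injective μ)
    (π π' : Fin N → ℝ)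
    (hπs : ∑ n, π n = 1)
    (hπ's : ∑ n, π' n = 1)
    (M : Matrix (Fin N) (Fin N) ℝ)
    (Lm : Fin N → ℝ) (hLm : ∀ i, Lm i = min (π i - π' i) 0)
    (h0 : ∫ x : ℝ, |∑ n, (π n - π' n) * gaussCDF (μ n) σ x| = 0) :
    π = π' ∧ Lm = 0 ∧ -(M *ᵥ Lm) = 0 := by
  have hsum : ∑ n, (π n - π' n) = 0 := by rw [Finset.sum_sub_distrib, hπs, hπ's, sub_self]
  have hF : (fun x => ∑ n, (π n - π' n) * gaussCDF (μ n) σ x) = 0 :=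
    (continuous_finsetSum _ fun n _ => continuous_const.mul (continuous_gaussCDF hσ (μ n))
      ).eq_zero_of_integral_abs_eq_zero (integrable_sum_mul_gaussCDF hσ μ hsum) h0
  have hpdf : ∑ n, (π n - π' n) • gaussPDF (μ n) σ = 0 := by
    ext x
    have hderiv := HasDerivAt.fun_sum (u := Finset.univ) fun n _ =>
      (hasDerivAt_gaussCDF hσ (μ n) x).const_mul (π n - π' n)
    rw [hF] at hderiv
    simpa using hderiv.unique (hasDerivAt_const x 0)
  have hππ' : π = π' := funext fun n =>
    sub_eq_zero.1 (Fintype.linearIndependent_iff.1 (linearIndependent_gaussPDF hσ.ne' hμ) _ hpdf n)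
  have hLm0 : Lm = 0 := funext fun i => by simp [hLm, hππ']
  exact ⟨hππ', hLm0, by simp [hLm0]⟩

/-- if the 1-Wasserstein distance `∫_ℝ |∑ (πₙ - π'ₙ) Fₙ(x)| dx` vanishes,
then `π = π'`, hence the negative part `L⁻` is zero and `NGMG(L⁻) = -M L⁻ = 0`. -/
theorem stmt_8 {N : ℕ} (hN : 1 ≤ N) (σ : ℝ) (hσ : 0 < σ)
    (μ : Fin N → ℝ) (hμ : Function.Injective μ)
    (π π' : Fin N → ℝ)
    (hπ : ∀ n, 0 ≤ π n) (hπs : ∑ n, π n = 1)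
    (hπ' : ∀ n, 0 ≤ π' n) (hπ's : ∑ n, π' n = 1)
    (M : Matrix (Fin N) (Fin N) ℝ)
    (hM : ∀ j i, M j i = if i = j then 0 else gaussPDF (μ i) σ (μ j))
    (Lm : Fin N → ℝ) (hLm : ∀ i, Lm i = min (π i - π' i) 0)
    (h0 : ∫ x : ℝ, |∑ n, (π n - π' n) * gaussCDF (μ n) σ x| = 0) :
    π = π' ∧ Lm = 0 ∧ -(M *ᵥ Lm) = 0 :=
  stmt_8_general σ hσ μ hμ π π' hπs hπ's M Lm hLm h0
end
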